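/- Let (x1,x2,x3,x4,x5,x6) be real numbers with x2, x4, x6 > 0 satisfying the system (E): x1 = 2·x2·x4 − (1/2)·(x2/x4 + x4/x2), x3 = 2·x4·x6 − (1/2)·(x4/x6 + x6/x4), x5 = 2·x2·x6 − (1/2)·(x2/x6 + x6/x2). If x1 ≥ 1, x3 ≥ 1 and x5 ≥ 1, then x2 > 1/2, x4 > 1/2 and x6 > 1/2. -/

import Mathlib

/-!
Clearing denominators, `1 ≤ 2ab - (a/b + b/a)/2` becomes `(a + b)² ≤ (2ab)²`, i.e. `a + b ≤ 2ab`.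
If then `a ≤ 1/2`, we would get `a + b ≤ 2ab ≤ b`, so `a ≤ 0`.
-/

theorem add_le_two_mul_of_one_le {a b : ℝ} (ha : 0 < a) (hb : 0 < b)
    (h : 1 ≤ 2 * a * b - (1/2) * (a / b + b / a)) : a + b ≤ 2 * a * b := by
  have hab : 0 < 2 * a * b := by positivity
  have hcleared : 2 * a * b * (2 * a * b - (1/2) * (a / b + b / a))
      = (2 * a * b) ^ 2 - (a ^ 2 + b ^ 2) := by
    field_simp
  have hsq : (a + b) ^ 2 ≤ (2 * a * b) ^ 2 := by
    nlinarith [mul_le_mul_of_nonneg_left h hab.le]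
  exact (pow_le_pow_iff_left₀ (by positivity) hab.le two_ne_zero).mp hsq

theorem half_lt_of_add_le_two_mul {a b : ℝ} (ha : 0 < a) (hb : 0 < b)
    (h : a + b ≤ 2 * a * b) : 1/2 < a := by
  by_contra! hle
  nlinarith [mul_le_mul_of_nonneg_right hle hb.le]

theorem half_lt_and_half_lt_of_one_le {a b : ℝ} (ha : 0 < a) (hb : 0 < b)
    (h : 1 ≤ 2 * a * b - (1/2) * (a / b + b / a)) : 1/2 < a ∧ 1/2 < b := by
  have hsum := add_le_two_mul_of_one_le ha hb h
  refine ⟨half_lt_of_add_le_two_mul ha hb hsum, half_lt_of_add_le_two_mul hb ha ?_⟩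
  linarith

theorem stmt_0 (x1 x2 x3 x4 x6 : ℝ)
    (h2 : 0 < x2) (h4 : 0 < x4) (h6 : 0 < x6)
    (e1 : x1 = 2 * x2 * x4 - (1/2) * (x2 / x4 + x4 / x2))
    (e3 : x3 = 2 * x4 * x6 - (1/2) * (x4 / x6 + x6 / x4))
    (h1 : 1 ≤ x1) (h3 : 1 ≤ x3) :
    1/2 < x2 ∧ 1/2 < x4 ∧ 1/2 < x6 := by
  obtain ⟨hx2, hx4⟩ := half_lt_and_half_lt_of_one_le h2 h4 (e1 ▸ h1)
  obtain ⟨-, hx6⟩ := half_lt_and_half_lt_of_one_le h4 h6 (e3 ▸ h3)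
  exact ⟨hx2, hx4, hx6⟩
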